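/- For every integer m ≥ 1, the generating function of the antidiagonal sums a_n = Σ_{k=0}^{⌊n/2⌋} B_m(n−k, k) of the m-th triangle of the first family is 1/((1+x²+⋯+x^{2(m−1)})(1−x−x²)); that is, in the ring of formal power series over ℤ, (1 + X² + X⁴ + ⋯ + X^{2(m−1)})·(1 − X − X²) · Σ_{n≥0} a_n X^n = 1. -/

import Mathlib

/-- The `m`-th Pascal-like triangle of the first family: `B m n 0 = 1`,
`B m n n = 1` if `m ∣ n` and `0` otherwise, and Pascal's recurrence
`B m n k = B m (n-1) k + B m (n-1) (k-1)` for `0 < k < n`.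
(Values with `k > n` are set to `0`.) -/
def B (m : ℕ) : ℕ → ℕ → ℕ
  | _, 0 => 1
  | 0, _ + 1 => 0
  | n + 1, k + 1 =>
      if n + 1 = k + 1 then (if m ∣ (n + 1) then 1 else 0)
      else if n + 1 < k + 1 then 0
      else B m n (k + 1) + B m n k

/-! Entries below the diagonal vanish, so `a n` is the sum of `B m` over the whole antidiagonal
`i + j = n`. Pascal's rule fails only on the diagonal, by `[m ∣ i + 1] - [m ∣ i]` at `(i + 1, i + 1)`,
and the antidiagonal `i + j = n` meets the diagonal only for even `n`; summing Pascal's rule over it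
gives `a (n + 2) - a (n + 1) - a n = [2m ∣ n + 2] - [2m ∣ n]`, i.e.
`(1 - X - X²) A = (1 - X²) / (1 - X^(2m))`. Finally
`(1 + X² + ⋯ + X^(2(m-1))) (1 - X²) = 1 - X^(2m)`. -/

open Finset PowerSeries

theorem Nat.sum_antidiagonal_ite_fst_eq_snd {M : Type*} [AddCommMonoid M] (f : ℕ → M) (n : ℕ) :
    ∑ p ∈ antidiagonal n, (if p.1 = p.2 then f p.1 else 0) = if Even n then f (n / 2) else 0 := by
  split_ifs with hn
  · obtain ⟨k, rfl⟩ := hn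
    rw [sum_eq_single (k, k)]
    · simp [← two_mul]
    · rintro ⟨i, j⟩ hij hne
      rw [HasAntidiagonal.mem_antidiagonal] at hij
      rw [if_neg]
      rintro (rfl : i = j)
      exact hne (by simp; omega)
    · simp
  · refine sum_eq_zero fun p hp => if_neg fun h => hn ⟨p.1, ?_⟩
    rw [HasAntidiagonal.mem_antidiagonal] at hp
    omega

theorem Nat.even_and_dvd_div_two_iff {m n : ℕ} : Even n ∧ m ∣ n / 2 ↔ 2 * m ∣ n := by
  constructor
  · rintro ⟨⟨k, rfl⟩, hk⟩
    rw [← two_mul, Nat.mul_div_cancel_left _ two_pos] at hk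
    rw [← two_mul]
    exact Nat.mul_dvd_mul_left 2 hk
  · rintro h
    obtain ⟨k, rfl⟩ := dvd_of_mul_right_dvd h
    rw [Nat.mul_dvd_mul_iff_left two_pos] at h
    exact ⟨even_two_mul k, by rwa [Nat.mul_div_cancel_left _ two_pos]⟩

namespace PowerSeries

variable {R : Type*}

theorem one_sub_X_pow_mul_mk_ite_dvd [Ring R] {k : ℕ} (hk : 0 < k) :
    (1 - X ^ k) * mk (fun n => if k ∣ n then (1 : R) else 0) = 1 := by
  ext n
  rw [sub_mul, one_mul, map_sub, coeff_X_pow_mul', coeff_mk, coeff_one]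
  by_cases hkn : k ≤ n
  · obtain ⟨j, rfl⟩ := Nat.exists_eq_add_of_le hkn
    rw [if_pos hkn, Nat.add_sub_cancel_left, coeff_mk, if_neg (show k + j ≠ 0 by omega)]
    simp only [Nat.dvd_add_self_left, sub_self]
  · rw [if_neg hkn, sub_zero]
    exact if_congr ⟨fun h => Nat.eq_zero_of_dvd_of_lt h (by omega), fun h => h ▸ dvd_zero k⟩ rfl rfl

theorem one_sub_X_sub_X_sq_mul_mk [CommRing R] {a g : ℕ → R} (h0 : a 0 = g 0)
    (h1 : a 1 - a 0 = g 1) (h : ∀ n, a (n + 2) - a (n + 1) - a n = g (n + 2) - g n) :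
    (1 - X - X ^ 2) * mk a = (1 - X ^ 2) * mk g := by
  ext (_ | _ | n)
  · simpa using h0
  · simpa [sub_mul, coeff_X_pow_mul'] using h1
  · simpa [sub_mul, coeff_X_pow_mul', coeff_succ_X_mul] using h n

end PowerSeries

section Triangle

variable (m : ℕ)

theorem B_zero_right (n : ℕ) : B m n 0 = 1 := by cases n <;> rfl

theorem B_self (n : ℕ) : B m n n = if m ∣ n then 1 else 0 := by
  cases n <;> simp [B]

theorem B_eq_zero_of_lt {n k : ℕ} (h : n < k) : B m n k = 0 := by
  obtain ⟨k, rfl⟩ := Nat.exists_eq_add_one_of_ne_zero (by omega : k ≠ 0)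
  cases n with
  | zero => rfl
  | succ n => rw [B, if_neg (by omega), if_pos h]

theorem B_succ_succ_add_ite (i j : ℕ) :
    B m (i + 1) (j + 1) + (if i = j ∧ m ∣ i then 1 else 0) =
      B m i (j + 1) + B m i j + (if i = j ∧ m ∣ i + 1 then 1 else 0) := by
  rcases lt_trichotomy j i with h | rfl | h
  · rw [B, if_neg (by omega), if_neg (by omega), if_neg (by omega), if_neg (by omega)]
  · rw [B_self, B_self, B_eq_zero_of_lt m (Nat.lt_succ_self _)]
    split_ifs <;> simp_all
  · rw [B_eq_zero_of_lt m (by omega : i + 1 < j + 1), B_eq_zero_of_lt m (by omega : i < j + 1),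
      B_eq_zero_of_lt m h, if_neg (by omega), if_neg (by omega)]

def antidiagSum (n : ℕ) : ℕ := ∑ p ∈ antidiagonal n, B m p.1 p.2

theorem sum_range_B_eq_antidiagSum (n : ℕ) :
    ∑ k ∈ range (n / 2 + 1), B m (n - k) k = antidiagSum m n := by
  rw [antidiagSum, ← Nat.sum_antidiagonal_swap, Nat.sum_antidiagonal_eq_sum_range_succ_mk]
  refine sum_subset (range_subset_range.2 (by omega)) fun k hk hk' => ?_
  simp only [mem_range] at hk hk'
  exact B_eq_zero_of_lt m (by omega)

theorem antidiagSum_add_two (n : ℕ) :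
    antidiagSum m (n + 2) + (if 2 * m ∣ n then 1 else 0) =
      antidiagSum m (n + 1) + antidiagSum m n + (if 2 * m ∣ n + 2 then 1 else 0) := by
  have hdiag (c : ℕ) :
      ∑ p ∈ antidiagonal n, (if p.1 = p.2 ∧ m ∣ p.1 + c then 1 else 0) =
        if 2 * m ∣ n + 2 * c then 1 else 0 := by
    simp_rw [ite_and]
    rw [Nat.sum_antidiagonal_ite_fst_eq_snd (fun i => if m ∣ i + c then 1 else 0), ← ite_and]
    refine if_congr ?_ rfl rfl
    rw [← Nat.even_and_dvd_div_two_iff,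
      Nat.add_mul_div_left _ _ two_pos, Nat.even_add, iff_true_right (even_two_mul c)]
  have hpascal := congrArg (fun f => ∑ p ∈ antidiagonal n, f p)
    (funext fun p : ℕ × ℕ => B_succ_succ_add_ite m p.1 p.2)
  have hdiag0 := hdiag 0
  simp only [add_zero, mul_zero] at hdiag0
  simp only [sum_add_distrib, hdiag0, hdiag 1, mul_one] at hpascal
  have hsucc : antidiagSum m (n + 1) = 1 + ∑ p ∈ antidiagonal n, B m p.1 (p.2 + 1) := by
    rw [antidiagSum, Nat.sum_antidiagonal_succ', B_zero_right]
  have hsucc_succ : antidiagSum m (n + 2) = 1 + ∑ p ∈ antidiagonal n, B m (p.1 + 1) (p.2 + 1) := by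
    rw [antidiagSum, Nat.sum_antidiagonal_succ', Nat.sum_antidiagonal_succ, B_zero_right,
      B_eq_zero_of_lt m (Nat.succ_pos _), zero_add]
  rw [hsucc, hsucc_succ, antidiagSum]
  omega

theorem antidiagSum_zero : antidiagSum m 0 = 1 := by
  simp [antidiagSum, B_zero_right]

theorem antidiagSum_one : antidiagSum m 1 = 1 := by
  simp [antidiagSum, Nat.sum_antidiagonal_succ, B_zero_right, B_eq_zero_of_lt]

end Triangle

/-- The generating function of the antidiagonal sums of the `m`-th triangle of
the first family is `1/((1 + x² + ⋯ + x^(2(m-1)))(1 - x - x²))`. -/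
theorem stmt_5 (m : ℕ) (hm : 1 ≤ m) :
    (∑ i ∈ Finset.range m, PowerSeries.X ^ (2 * i)) *
        (1 - PowerSeries.X - PowerSeries.X ^ 2) *
      PowerSeries.mk
        (fun n => ((∑ k ∈ Finset.range (n / 2 + 1), B m (n - k) k : ℕ) : ℤ)) = 1 := by
  have hrec : (1 - X - X ^ 2 : ℤ⟦X⟧) * PowerSeries.mk (fun n => (antidiagSum m n : ℤ)) =
      (1 - X ^ 2) * PowerSeries.mk (fun n => if 2 * m ∣ n then 1 else 0) := by
    refine one_sub_X_sub_X_sq_mul_mk ?_ ?_ fun n => ?_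
    · simp [antidiagSum_zero]
    · have : ¬ 2 * m ∣ 1 := fun h => by have := Nat.eq_one_of_dvd_one h; omega
      simp [antidiagSum_zero, antidiagSum_one, this]
    · have := congrArg (Nat.cast : ℕ → ℤ) (antidiagSum_add_two m n)
      push_cast [Nat.cast_ite] at this
      linarith
  calc _ = (∑ i ∈ range m, (X ^ 2 : ℤ⟦X⟧) ^ i) * (1 - X ^ 2) *
        PowerSeries.mk (fun n => if 2 * m ∣ n then 1 else 0) := by
        simp only [sum_range_B_eq_antidiagSum, ← pow_mul]
        rw [mul_assoc, hrec, mul_assoc]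
    _ = 1 := by
      rw [geom_sum_mul_neg, ← pow_mul, one_sub_X_pow_mul_mk_ite_dvd (by omega)]
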